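/- Let k ≥ 4 be even, write r = 2k·k₁ + r₁ with k₁ ≥ k/2 and 1 ≤ r₁ ≤ 2k−1, and partition each side of K_{r,r} into 2k groups U₁,…,U_{2k} and W₁,…,W_{2k}, where U_i and W_i each contain k₁ designated vertices plus one extra vertex when i ≤ r₁. Color edge uw with color 1 if u is the p-th designated vertex of U_i, w is the p-th designated vertex of W_j, and i ≡ j (mod 2), or if u, w are the extra vertices of U_i, W_j with i ≡ j (mod 2); color uw with color 2 if u ∈ U_i and w ∈ W_{i−1} (indices mod 2k); color all remaining edges with color 3. Then for any two distinct vertices u ≠ v lying in the same part of K_{r,r}, there exist at least k internally disjoint rainbow u–v paths of length 2. -/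

import Mathlib

/-!
Every vertex `m` on the other side gives a path `u – m – v` of length two, rainbow as soon as
its two edges get different colours, and distinct middle vertices give internally disjoint paths;
so it suffices to exhibit `k` middle vertices at which `u` and `v` see different colours.
If `u` and `v` lie in the same group, take the `k` vertices matched (by colour 1) to one of them
in the groups of the same parity: their edges to the other one carry colour 3. Otherwise colour 2
runs from each of `u`, `v` into a single group, which differs for `u` and `v`; `k / 2` designated
vertices from each of these two groups do the job.
-/

open SimpleGraph

/-- The complete bipartite graph `K_{r,r}` with both parts `Fin r`. -/
abbrev Krr (r : ℕ) : SimpleGraph (Fin r ⊕ Fin r) :=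
  completeBipartiteGraph (Fin r) (Fin r)

/-- A walk is a rainbow path (w.r.t. edge-coloring `c`) if it is a path and
all its edges receive pairwise distinct colors. -/
def RainbowPath {V α : Type*} {G : SimpleGraph V} (c : Sym2 V → α) {u v : V}
    (p : G.Walk u v) : Prop :=
  p.IsPath ∧ (p.edges.map c).Nodup

/-- Two `u`-`v` walks are internally disjoint if they share no vertices other
than `u` and `v`. -/
def IntDisjoint {V : Type*} {G : SimpleGraph V} {u v : V}
    (p q : G.Walk u v) : Prop :=
  ∀ x, x ∈ p.support → x ∈ q.support → x = u ∨ x = v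

/-- `G` admits a `j`-edge-coloring under which every two distinct vertices are
joined by at least `k` internally disjoint rainbow paths. -/
def HasRainbowKColoring {V : Type*} (G : SimpleGraph V) (k j : ℕ) : Prop :=
  ∃ c : Sym2 V → Fin j, ∀ u v : V, u ≠ v →
    ∃ P : Fin k → G.Walk u v, Function.Injective P ∧
      (∀ i, RainbowPath c (P i)) ∧
      ∀ i i', i ≠ i' → IntDisjoint (P i) (P i')

/-- The rainbow `k`-connectivity: the least number of colors as above. -/
noncomputable def rck {V : Type*} (G : SimpleGraph V) (k : ℕ) : ℕ :=
  sInf {j | HasRainbowKColoring G k j}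

/-- A side of the bipartition: `2k` groups, each with `k₁` designated vertices
(`Sum.inl (i, p)` is the `p`-th designated vertex of group `i`), plus one extra
vertex `Sum.inr i` for each of the first `r₁` groups. In total `2k·k₁ + r₁ = r`
vertices. -/
abbrev GV (k k₁ r₁ : ℕ) := (Fin (2 * k) × Fin k₁) ⊕ Fin r₁

/-- The group (0-indexed) of a vertex of one side. -/
def grp {k k₁ r₁ : ℕ} : GV k k₁ r₁ → ℕ
  | Sum.inl (i, _) => i.val
  | Sum.inr s => s.val

/-- The condition for color 1: matched designated vertices (same index `p`) in
same-parity groups, or two extra vertices in same-parity groups. -/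
def color1 {k k₁ r₁ : ℕ} : GV k k₁ r₁ → GV k k₁ r₁ → Bool
  | Sum.inl (i, p), Sum.inl (j, q) => decide (p = q ∧ i.val % 2 = j.val % 2)
  | Sum.inr s, Sum.inr t => decide (s.val % 2 = t.val % 2)
  | _, _ => false

/-- The color of the edge from `a` in the `U`-side to `b` in the `W`-side:
color `0` ("1") on matched same-parity pairs, color `1` ("2") on edges from
`U_i` to `W_{i-1}` (indices mod `2k`), and color `2` ("3") otherwise. -/
def col (k : ℕ) {k₁ r₁ : ℕ} (a b : GV k k₁ r₁) : Fin 3 :=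
  if color1 a b then 0
  else if (grp b + 1) % (2 * k) = grp a then 1
  else 2

/-- The 3-edge-coloring of `K_{r,r}` (with `r = 2k·k₁ + r₁`). -/
def theColoring (k k₁ r₁ : ℕ) : Sym2 (GV k k₁ r₁ ⊕ GV k k₁ r₁) → Fin 3 :=
  Sym2.lift ⟨fun x y =>
    match x, y with
    | Sum.inl a, Sum.inr b => col k a b
    | Sum.inr b, Sum.inl a => col k a b
    | _, _ => 0,
    by intro x y; cases x <;> cases y <;> rfl⟩

lemma SimpleGraph.exists_rainbow_paths_of_middle {V α ι : Type*} {G : SimpleGraph V}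
    (c : Sym2 V → α) {u v : V} (huv : u ≠ v) (M : ι → V) (hM : Function.Injective M)
    (hu : ∀ i, G.Adj u (M i)) (hv : ∀ i, G.Adj (M i) v)
    (hc : ∀ i, c s(u, M i) ≠ c s(M i, v)) :
    ∃ P : ι → G.Walk u v, Function.Injective P ∧ (∀ i, RainbowPath c (P i)) ∧
      (∀ i, (P i).length = 2) ∧ ∀ i i', i ≠ i' → IntDisjoint (P i) (P i') := by
  refine ⟨fun i => .cons (hu i) (.cons (hv i) .nil), fun i j h => ?_, fun i => ⟨?_, ?_⟩,
    fun _ => rfl, fun i i' hii x hx hx' => ?_⟩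
  · have := congrArg Walk.support h
    simp only [Walk.support_cons, Walk.support_nil, List.cons.injEq] at this
    exact hM this.2.1
  · simp [Walk.isPath_def, huv, (hu i).ne, (hv i).ne]
  · simpa using hc i
  · simp only [Walk.support_cons, Walk.support_nil, List.mem_cons, List.not_mem_nil,
      or_false] at hx hx'
    rcases hx with rfl | rfl | rfl
    · exact .inl rfl
    · rcases hx' with h | h | h
      · exact .inl h
      · exact absurd (hM h) hii
      · exact .inr h
    · exact .inr rfl

lemma succ_mod_two_mul_ne_of_mod_two_eq {n x y : ℕ} (h : x % 2 = y % 2) :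
    (x + 1) % (2 * n) ≠ y := by
  have := Nat.mod_mod_of_dvd (x + 1) (dvd_mul_right 2 n)
  omega

lemma eq_of_succ_mod_eq {n x y : ℕ} (hx : x < n) (hy : y < n)
    (h : (x + 1) % n = (y + 1) % n) : x = y :=
  (Nat.ModEq.add_right_cancel' 1 h).eq_of_lt_of_lt hx hy

lemma exists_succ_mod_eq {n x : ℕ} (hx : x < n) : ∃ g : Fin n, (g.val + 1) % n = x := by
  rcases Nat.eq_zero_or_pos x with rfl | hx0
  · exact ⟨⟨n - 1, by omega⟩, by simp [Nat.sub_add_cancel (by omega : 1 ≤ n)]⟩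
  · exact ⟨⟨x - 1, by omega⟩, by simp [Nat.sub_add_cancel hx0, Nat.mod_eq_of_lt hx]⟩

section Coloring

variable {k k₁ r₁ : ℕ}

lemma grp_lt (hr₁ : r₁ ≤ 2 * k) : ∀ a : GV k k₁ r₁, grp a < 2 * k
  | .inl (i, _) => i.isLt
  | .inr s => s.isLt.trans_le hr₁

lemma color1_comm (a b : GV k k₁ r₁) : color1 a b = color1 b a := by
  rcases a with ⟨i, p⟩ | s <;> rcases b with ⟨j, q⟩ | t <;>
    simp only [color1, eq_comm]

lemma grp_mod_two_eq_of_color1 {a b : GV k k₁ r₁} (h : color1 a b = true) :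
    grp a % 2 = grp b % 2 := by
  rcases a with ⟨i, p⟩ | s <;> rcases b with ⟨j, q⟩ | t <;>
    simp_all [color1, grp]

lemma col_of_grp_mod_two_eq {a b : GV k k₁ r₁} (h : grp a % 2 = grp b % 2) :
    col k a b = if color1 a b then 0 else 2 := by
  simp [col, succ_mod_two_mul_ne_of_mod_two_eq h.symm]

lemma col_eq_one_iff (a b : GV k k₁ r₁) : col k a b = 1 ↔ (grp b + 1) % (2 * k) = grp a := by
  cases hc : color1 a b
  · simp [col, hc]
  · simp [col, hc, succ_mod_two_mul_ne_of_mod_two_eq (grp_mod_two_eq_of_color1 hc).symm]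

lemma exists_color1_inl_eq_true_of_grp_eq (i : Fin (2 * k)) (q : Fin k₁) (b : GV k k₁ r₁)
    (hb : b ≠ .inl (i, q)) (hg : grp b = i) :
    ∃ M : Fin k → GV k k₁ r₁, Function.Injective M ∧ ∀ j,
      grp (M j) % 2 = i % 2 ∧ color1 (.inl (i, q)) (M j) = true ∧ color1 b (M j) = false := by
  refine ⟨fun j => .inl (⟨2 * j + i % 2, by omega⟩, q), fun j j' h => ?_, fun j => ?_⟩
  · simp only [Sum.inl.injEq, Prod.mk.injEq, Fin.mk.injEq] at h
    exact Fin.ext (by omega)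
  · rcases b with ⟨i', q'⟩ | t
    · obtain rfl : i' = i := Fin.ext hg
      have hq : q' ≠ q := by rintro rfl; exact hb rfl
      simp [color1, grp, hq]
    · simp [color1, grp]

lemma exists_color1_ne_of_grp_eq {a b : GV k k₁ r₁} (hab : a ≠ b) (hg : grp a = grp b) :
    ∃ M : Fin k → GV k k₁ r₁, Function.Injective M ∧ ∀ j,
      grp (M j) % 2 = grp a % 2 ∧ color1 a (M j) ≠ color1 b (M j) := by
  rcases a with ⟨i, q⟩ | s
  · obtain ⟨M, hM, h⟩ := exists_color1_inl_eq_true_of_grp_eq i q b hab.symm hg.symm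
    exact ⟨M, hM, fun j => ⟨(h j).1, by simp [(h j).2.1, (h j).2.2]⟩⟩
  rcases b with ⟨i, q⟩ | t
  · obtain ⟨M, hM, h⟩ := exists_color1_inl_eq_true_of_grp_eq i q (.inr s) hab hg
    exact ⟨M, hM, fun j => ⟨hg ▸ (h j).1, by simp [(h j).2.1, (h j).2.2]⟩⟩
  · exact absurd (congrArg Sum.inr (Fin.ext hg)) hab

lemma exists_injective_grp_eq_or (hk : k ≤ 2 * k₁) {g g' : Fin (2 * k)} (hgg' : g ≠ g') :
    ∃ M : Fin k → GV k k₁ r₁, Function.Injective M ∧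
      ∀ j, grp (M j) = g ∨ grp (M j) = g' := by
  obtain ⟨e⟩ := Function.Embedding.nonempty_of_card_le
    (α := Fin k) (β := Fin 2 × Fin k₁) (by simpa using hk)
  have hgroup : Function.Injective ![g, g'] := by
    intro x y h
    fin_cases x <;> fin_cases y <;> simp_all [hgg'.symm]
  refine ⟨fun j => .inl (Prod.map ![g, g'] id (e j)),
    Sum.inl_injective.comp ((hgroup.prodMap Function.injective_id).comp e.injective),
    fun j => ?_⟩
  have : ∀ x : Fin 2, ![g, g'] x = g ∨ ![g, g'] x = g' := by simp [Fin.forall_fin_two]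
  simp [grp, Fin.val_inj, this]

lemma col_ne_of_color1_ne {a b m m' : GV k k₁ r₁} (ha : grp a % 2 = grp m % 2)
    (hb : grp b % 2 = grp m' % 2) (h : color1 a m ≠ color1 b m') : col k a m ≠ col k b m' := by
  rw [col_of_grp_mod_two_eq ha, col_of_grp_mod_two_eq hb]
  revert h
  cases color1 a m <;> cases color1 b m' <;> decide

lemma exists_col_left_ne (hk : k ≤ 2 * k₁) (hr₁ : r₁ ≤ 2 * k) {a b : GV k k₁ r₁}
    (hab : a ≠ b) :
    ∃ M : Fin k → GV k k₁ r₁, Function.Injective M ∧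
      ∀ j, col k a (M j) ≠ col k b (M j) := by
  by_cases hg : grp a = grp b
  · obtain ⟨M, hM, h⟩ := exists_color1_ne_of_grp_eq hab hg
    exact ⟨M, hM, fun j => col_ne_of_color1_ne (h j).1.symm (hg ▸ (h j).1.symm) (h j).2⟩
  obtain ⟨g, hga⟩ := exists_succ_mod_eq (grp_lt hr₁ a)
  obtain ⟨g', hgb⟩ := exists_succ_mod_eq (grp_lt hr₁ b)
  obtain ⟨M, hM, h⟩ := exists_injective_grp_eq_or (r₁ := r₁) hk
    (show g ≠ g' by rintro rfl; exact hg (hga.symm.trans hgb))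
  refine ⟨M, hM, fun j => ?_⟩
  rcases h j with h | h
  · have hb : col k b (M j) ≠ 1 := fun h' =>
      hg (by rw [← hga, ← (col_eq_one_iff _ _).1 h', h])
    rw [(col_eq_one_iff a (M j)).2 (by rw [h]; exact hga)]
    exact hb.symm
  · have ha : col k a (M j) ≠ 1 := fun h' =>
      hg (by rw [← hgb, ← (col_eq_one_iff _ _).1 h', h])
    rw [(col_eq_one_iff b (M j)).2 (by rw [h]; exact hgb)]
    exact ha

lemma exists_col_right_ne (hk : k ≤ 2 * k₁) (hr₁ : r₁ ≤ 2 * k) {a b : GV k k₁ r₁}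
    (hab : a ≠ b) :
    ∃ M : Fin k → GV k k₁ r₁, Function.Injective M ∧
      ∀ j, col k (M j) a ≠ col k (M j) b := by
  by_cases hg : grp a = grp b
  · obtain ⟨M, hM, h⟩ := exists_color1_ne_of_grp_eq hab hg
    refine ⟨M, hM, fun j => col_ne_of_color1_ne (h j).1 (hg ▸ (h j).1) ?_⟩
    rw [color1_comm, color1_comm (M j)]
    exact (h j).2
  have hinj := eq_of_succ_mod_eq (grp_lt hr₁ a) (grp_lt hr₁ b)
  have hpos : 0 < 2 * k := (grp_lt hr₁ a).pos
  obtain ⟨M, hM, h⟩ := exists_injective_grp_eq_or (r₁ := r₁) hk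
    (g := ⟨(grp a + 1) % (2 * k), Nat.mod_lt _ hpos⟩)
    (g' := ⟨(grp b + 1) % (2 * k), Nat.mod_lt _ hpos⟩) (fun h => hg (hinj (Fin.val_eq_of_eq h)))
  refine ⟨M, hM, fun j => ?_⟩
  rcases h j with h | h
  · have hb : col k (M j) b ≠ 1 := fun h' =>
      hg (hinj (h.symm.trans ((col_eq_one_iff _ _).1 h').symm))
    rw [(col_eq_one_iff (M j) a).2 h.symm]
    exact hb.symm
  · have ha : col k (M j) a ≠ 1 := fun h' => hg (hinj (((col_eq_one_iff _ _).1 h').trans h))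
    rw [(col_eq_one_iff (M j) b).2 h.symm]
    exact ha

end Coloring

theorem stmt7_general (k k₁ r₁ : ℕ) (hke : Even k)
    (hk₁ : k / 2 ≤ k₁) (hr₁' : r₁ ≤ 2 * k - 1)
    (u v : GV k k₁ r₁ ⊕ GV k k₁ r₁) (huv : u ≠ v)
    (hsame : u.isLeft = v.isLeft) :
    ∃ P : Fin k →
        (completeBipartiteGraph (GV k k₁ r₁) (GV k k₁ r₁)).Walk u v,
      Function.Injective P ∧
      (∀ i, RainbowPath (theColoring k k₁ r₁) (P i)) ∧
      (∀ i, (P i).length = 2) ∧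
      ∀ i i', i ≠ i' → IntDisjoint (P i) (P i') := by
  have hk : k ≤ 2 * k₁ := by
    obtain ⟨j, rfl⟩ := hke
    omega
  have hr₁ : r₁ ≤ 2 * k := hr₁'.trans (Nat.sub_le _ _)
  rcases u with a | a <;> rcases v with b | b <;> simp only [Sum.isLeft_inl, Sum.isLeft_inr,
    reduceCtorEq] at hsame
  · obtain ⟨M, hM, hc⟩ := exists_col_left_ne hk hr₁ (ne_of_apply_ne Sum.inl huv)
    exact exists_rainbow_paths_of_middle _ huv (Sum.inr ∘ M) (Sum.inr_injective.comp hM)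
      (by simp) (by simp) hc
  · obtain ⟨M, hM, hc⟩ := exists_col_right_ne hk hr₁ (ne_of_apply_ne Sum.inr huv)
    exact exists_rainbow_paths_of_middle _ huv (Sum.inl ∘ M) (Sum.inl_injective.comp hM)
      (by simp) (by simp) hc

theorem stmt7 (k k₁ r₁ : ℕ) (hk : 4 ≤ k) (hke : Even k)
    (hk₁ : k / 2 ≤ k₁) (hr₁ : 1 ≤ r₁) (hr₁' : r₁ ≤ 2 * k - 1)
    (u v : GV k k₁ r₁ ⊕ GV k k₁ r₁) (huv : u ≠ v)
    (hsame : u.isLeft = v.isLeft) :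
    ∃ P : Fin k →
        (completeBipartiteGraph (GV k k₁ r₁) (GV k k₁ r₁)).Walk u v,
      Function.Injective P ∧
      (∀ i, RainbowPath (theColoring k k₁ r₁) (P i)) ∧
      (∀ i, (P i).length = 2) ∧
      ∀ i i', i ≠ i' → IntDisjoint (P i) (P i') :=
  stmt7_general k k₁ r₁ hke hk₁ hr₁' u v huv hsame
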